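/- Every regular flow on a compact metric space admits a monotonous field of cross sections. -/

import Mathlib

open Set Metric Filter Topology

universe u

def IsFlow {X : Type u} [TopologicalSpace X] (φ : ℝ → X → X) : Prop :=
  Continuous (fun p : ℝ × X => φ p.1 p.2) ∧ (∀ x, φ 0 x = x) ∧
    ∀ (s t : ℝ) (x : X), φ (s + t) x = φ s (φ t x)

def IsRegularFlow {X : Type u} [TopologicalSpace X] (φ : ℝ → X → X) : Prop :=
  IsFlow φ ∧ ∀ x : X, ∃ t : ℝ, φ t x ≠ x

/-- `B_r(K)`, the closed `r`-neighborhood of a set `K`. -/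
def ballSet {X : Type u} [PseudoMetricSpace X] (r : ℝ) (K : Set X) : Set X :=
  ⋃ z ∈ K, closedBall z r

/-- A field of compact sets: compact values, `x ∈ h x`, and semicontinuity. -/
def IsFieldOfCompactSets {X : Type u} [MetricSpace X] (h : X → Set X) : Prop :=
  (∀ x : X, IsCompact (h x)) ∧ (∀ x : X, x ∈ h x) ∧
    ∀ x : X, ∀ ε > (0 : ℝ), ∃ δ > (0 : ℝ), ∀ y : X, dist x y < δ → h y ⊆ ballSet ε (h x)

def IsFieldOfNbhds {X : Type u} [MetricSpace X] (N : X → Set X) : Prop :=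
  IsFieldOfCompactSets N ∧ ∃ r > (0 : ℝ), ∀ x : X, closedBall x r ⊆ N x

/-- `φ_I(h)`, the saturation of a field `h` by flow-times in `I`. -/
def flowSat {X : Type u} [TopologicalSpace X] (φ : ℝ → X → X) (I : Set ℝ) (h : X → Set X) :
    X → Set X :=
  fun x => {z | ∃ t ∈ I, ∃ y ∈ h x, z = φ t y}

def IsCrossSectionField {X : Type u} [MetricSpace X] (φ : ℝ → X → X) (H : X → Set X) : Prop :=
  IsFieldOfCompactSets H ∧ ∃ τ > (0 : ℝ),
    IsFieldOfNbhds (flowSat φ (Icc (-τ) τ) H) ∧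
    ∀ x : X, ∀ y ∈ H x, H x ∩ {z | ∃ t : ℝ, |t| ≤ τ ∧ z = φ t y} = {y}

def IsMonotonousField {X : Type u} [MetricSpace X] (φ : ℝ → X → X) (H : X → Set X) : Prop :=
  ∃ ε > (0 : ℝ), ∀ x : X, ∀ t ∈ Ioo (0 : ℝ) ε, H x ∩ H (φ t x) = ∅

def fieldTranspose {X : Type u} (h : X → Set X) : X → Set X := fun x => {y | x ∈ h y}

def IsSymmetricField {X : Type u} (h : X → Set X) : Prop := fieldTranspose h = h

def IsLocallySymmetricField {X : Type u} [MetricSpace X] (h : X → Set X) : Prop :=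
  ∃ δ > (0 : ℝ), IsSymmetricField (fun x => closedBall x δ ∩ h x)

/-- Continuity of a field with respect to the Hausdorff metric. -/
def IsContinuousField {X : Type u} [MetricSpace X] (h : X → Set X) : Prop :=
  ∀ x : X, ∀ ε > (0 : ℝ), ∃ δ > (0 : ℝ), ∀ y : X,
    dist x y < δ → hausdorffDist (h x) (h y) < ε

def IsExpansiveFlow {X : Type u} [MetricSpace X] (φ : ℝ → X → X) : Prop :=
  ∀ ε > (0 : ℝ), ∃ δ > (0 : ℝ), ∀ x y : X, ∀ h : ℝ → ℝ,
    Continuous h → StrictMono h → Function.Surjective h → h 0 = 0 →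
    (∀ t : ℝ, dist (φ (h t) y) (φ t x) < δ) → ∃ t ∈ Ioo (-ε) ε, y = φ t x

def IsPositiveExpansiveFlow {X : Type u} [MetricSpace X] (φ : ℝ → X → X) : Prop :=
  ∀ ε > (0 : ℝ), ∃ δ > (0 : ℝ), ∀ x y : X, ∀ h : ℝ → ℝ,
    ContinuousOn h (Ici 0) → StrictMonoOn h (Ici 0) → h 0 = 0 →
    MapsTo h (Ici 0) (Ici 0) → SurjOn h (Ici 0) (Ici 0) →
    (∀ t ≥ (0 : ℝ), dist (φ (h t) y) (φ t x) < δ) → ∃ t ∈ Ioo (-ε) ε, y = φ t x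

/-- A one-parameter family of cross sections as produced by Theorem `secContMonSym`
of the paper: jointly continuous (Hausdorff metric), with nonempty compact
connected values; each `H ε` (for `ε ∈ (0,r]`) is a continuous, monotonous,
locally symmetric field of cross sections; `H 0 x = {x}`; monotone in `ε`. -/
structure CrossSectionFamily {X : Type u} [MetricSpace X] (φ : ℝ → X → X) where
  r : ℝ
  r_pos : 0 < r
  H : ℝ → X → Set X
  compact : ∀ ε ∈ Icc (0 : ℝ) r, ∀ x : X, IsCompact (H ε x)
  connected : ∀ ε ∈ Icc (0 : ℝ) r, ∀ x : X, IsConnected (H ε x)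
  jointCont : ∀ ε ∈ Icc (0 : ℝ) r, ∀ x : X, ∀ η > (0 : ℝ), ∃ δ > (0 : ℝ),
    ∀ ε' ∈ Icc (0 : ℝ) r, ∀ y : X, |ε - ε'| < δ → dist x y < δ →
      hausdorffDist (H ε x) (H ε' y) < η
  cross : ∀ ε ∈ Ioc (0 : ℝ) r, IsCrossSectionField φ (H ε)
  monot : ∀ ε ∈ Ioc (0 : ℝ) r, IsMonotonousField φ (H ε)
  contField : ∀ ε ∈ Ioc (0 : ℝ) r, IsContinuousField (H ε)
  locSym : ∀ ε ∈ Ioc (0 : ℝ) r, IsLocallySymmetricField (H ε)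
  zero : ∀ x : X, H 0 x = {x}
  mono : ∀ ε ε' : ℝ, 0 ≤ ε → ε ≤ ε' → ε' ≤ r → ∀ x : X, H ε x ⊆ H ε' x

/-- The stable set `W^s` of `x` relative to a field of cross sections `Hε`. -/
def Wstable {X : Type u} [MetricSpace X] (φ : ℝ → X → X) (Hε : X → Set X) (x : X) : Set X :=
  {y | ∃ h : ℝ → ℝ, ContinuousOn h (Ici 0) ∧ StrictMonoOn h (Ici 0) ∧ h 0 = 0 ∧
    MapsTo h (Ici 0) (Ici 0) ∧ SurjOn h (Ici 0) (Ici 0) ∧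
    ∀ t ≥ (0 : ℝ), φ (h t) y ∈ Hε (φ t x)}

/-- The unstable set `W^u` of `x` relative to a field of cross sections `Hε`. -/
def Wunstable {X : Type u} [MetricSpace X] (φ : ℝ → X → X) (Hε : X → Set X) (x : X) : Set X :=
  {y | ∃ h : ℝ → ℝ, ContinuousOn h (Iic 0) ∧ StrictMonoOn h (Iic 0) ∧ h 0 = 0 ∧
    MapsTo h (Iic 0) (Iic 0) ∧ SurjOn h (Iic 0) (Iic 0) ∧
    ∀ t ≤ (0 : ℝ), φ (h t) y ∈ Hε (φ t x)}

def IsStablePoint {X : Type u} [MetricSpace X] (φ : ℝ → X → X) (F : CrossSectionFamily φ)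
    (x : X) : Prop :=
  ∀ ε ∈ Ioc (0 : ℝ) F.r, ∃ δ ∈ Ioc (0 : ℝ) F.r, F.H δ x ⊆ Wstable φ (F.H ε) x

/-- `Φ_t(x,S)`: the image of `S` under the sectional flow over `x` at time `t ≥ 0`. -/
def secImage {X : Type u} [MetricSpace X] (φ : ℝ → X → X) (Hd : X → Set X) (x : X)
    (S : Set X) (t : ℝ) : Set X :=
  {z | ∃ y ∈ S, ∃ g : ℝ → ℝ, ContinuousOn g (Ici 0) ∧ g 0 = 0 ∧
    (∀ s ≥ (0 : ℝ), φ (g s) y ∈ Hd (φ s x)) ∧ z = φ (g t) y}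

/-- `Φ_t(x,C)` for the sectional flow defined on the time interval `[0,s]`. -/
def secImageOn {X : Type u} [MetricSpace X] (φ : ℝ → X → X) (Hd : X → Set X) (x : X)
    (C : Set X) (s t : ℝ) : Set X :=
  {z | ∃ y ∈ C, ∃ g : ℝ → ℝ, ContinuousOn g (Icc 0 s) ∧ g 0 = 0 ∧
    (∀ u ∈ Icc (0 : ℝ) s, φ (g u) y ∈ Hd (φ u x)) ∧ z = φ (g t) y}

def IsOneParamNbhdField {X : Type u} [MetricSpace X] (N : ℝ → X → Set X) : Prop :=
  (∀ p ∈ Icc (0 : ℝ) 1, ∀ x : X, IsCompact (N p x) ∧ (N p x).Nonempty) ∧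
  (∀ p ∈ Icc (0 : ℝ) 1, ∀ x : X, ∀ η > (0 : ℝ), ∃ δ > (0 : ℝ), ∀ q ∈ Icc (0 : ℝ) 1, ∀ y : X,
      |p - q| < δ → dist x y < δ → hausdorffDist (N p x) (N q y) < η) ∧
  (∀ p ∈ Ioc (0 : ℝ) 1, IsFieldOfNbhds (N p)) ∧
  (∀ x : X, N 0 x = {x}) ∧ (∀ x : X, N 1 x = univ)

/-- `ℤ`-iterates of a homeomorphism. -/
def homeoIter {X : Type u} [TopologicalSpace X] (f : X ≃ₜ X) : ℤ → X → X
  | Int.ofNat n => (⇑f)^[n]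
  | Int.negSucc n => (⇑f.symm)^[n + 1]

def IsExpansiveHomeo {X : Type u} [MetricSpace X] (f : X ≃ₜ X) : Prop :=
  ∃ c > (0 : ℝ), ∀ x y : X, (∀ n : ℤ, dist (homeoIter f n x) (homeoIter f n y) ≤ c) → x = y


/-!
Fix a time `T` shorter than every period, so that `φ v x` stays a definite distance `a` away
from `x` for `|v| ∈ [T/2, 3T/2]`. Whitney's function
`W x y = ∫₀ᵀ d(φ_u y, x) du - ∫₋ᵀ⁰ d(φ_u y, x) du` then increases at rate `≥ a` along the orbit
of every `y` near `x`, so that orbit crosses the level `W x · = W x x` exactly once within a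
short time; the crossing time `l x y` is continuous and satisfies `l x (φ t y) = l x y + t`.
The sections `{y | l x y = 0}` need not follow `x` along the flow, so `l` is replaced by its
average `L x y = S⁻¹ ∫₀ˢ l (φ_u x) (φ_u y) du` along the flow. This keeps the shift property
and adds `L (φ s x) z ≤ L x z - s / 2` for small `s ≥ 0`, which makes the sections
`H x = {y near x | L x y = 0}` disjoint along short orbit segments. Semicontinuity of `H` comes
from its graph being closed.
-/

section FieldsOfCompactSets

variable {X : Type u} [MetricSpace X] [CompactSpace X]

theorem isFieldOfCompactSets_of_isClosed {h : X → Set X} (hmem : ∀ x, x ∈ h x)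
    (hc : IsClosed {p : X × X | p.2 ∈ h p.1}) : IsFieldOfCompactSets h := by
  refine ⟨fun x => (hc.preimage (Continuous.prodMk_right x)).isCompact, hmem, ?_⟩
  intro x ε hε
  set U := ⋃ z ∈ h x, ball z ε
  -- the base points whose fibre leaves `U` form a compact set missing `x`
  have hK : IsClosed (Prod.fst '' ({p : X × X | p.2 ∈ h p.1} ∩ Prod.snd ⁻¹' Uᶜ)) :=
    ((hc.inter ((isOpen_biUnion fun _ _ => isOpen_ball).isClosed_compl.preimage
      continuous_snd)).isCompact.image continuous_fst).isClosed
  have hx : x ∈ (Prod.fst '' ({p : X × X | p.2 ∈ h p.1} ∩ Prod.snd ⁻¹' Uᶜ))ᶜ := by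
    rintro ⟨⟨x', w⟩, ⟨hw, hwU⟩, rfl⟩
    exact hwU (mem_biUnion hw (mem_ball_self hε))
  obtain ⟨δ, hδ, hball⟩ := Metric.isOpen_iff.mp hK.isOpen_compl x hx
  refine ⟨δ, hδ, fun y hy w hw => ?_⟩
  by_contra hwε
  refine hball (mem_ball.mpr (by rwa [dist_comm])) ⟨(y, w), ⟨hw, fun hwU => hwε ?_⟩, rfl⟩
  obtain ⟨z, hz, hwz⟩ := mem_iUnion₂.mp hwU
  exact mem_iUnion₂.mpr ⟨z, hz, ball_subset_closedBall hwz⟩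

theorem isClosed_flowSat_graph {φ : ℝ → X → X} (hφ : Continuous fun p : ℝ × X => φ p.1 p.2)
    {I : Set ℝ} (hI : IsCompact I) {h : X → Set X} (hc : IsClosed {p : X × X | p.2 ∈ h p.1}) :
    IsClosed {p : X × X | p.2 ∈ flowSat φ I h p.1} := by
  have : {p : X × X | p.2 ∈ flowSat φ I h p.1} =
      (fun q : ℝ × X × X => (q.2.1, φ q.1 q.2.2)) '' (I ×ˢ {p : X × X | p.2 ∈ h p.1}) := by
    ext ⟨x, z⟩
    simp only [flowSat, mem_ofPred_eq, mem_image, mem_prod, Prod.exists, Prod.mk.injEq]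
    constructor
    · rintro ⟨t, ht, y, hy, rfl⟩
      exact ⟨t, x, y, ⟨ht, hy⟩, rfl, rfl⟩
    · rintro ⟨t, x, y, ⟨ht, hy⟩, rfl, rfl⟩
      exact ⟨t, ht, y, hy, rfl⟩
  rw [this]
  exact ((hI.prod hc.isCompact).image (by fun_prop)).isClosed

theorem exists_forall_abs_le_of_continuousOn {f : X → X → ℝ} {r : ℝ} (hr : 0 < r)
    (hf : ContinuousOn (Function.uncurry f) {p | dist p.1 p.2 ≤ r}) (hdiag : ∀ x, f x x = 0) :
    ∀ ε > 0, ∃ δ > 0, ∀ x y, dist x y ≤ δ → |f x y| ≤ ε := by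
  intro ε hε
  have hK : IsCompact {p : X × X | dist p.1 p.2 ≤ r} :=
    (isClosed_le (by fun_prop) continuous_const).isCompact
  obtain ⟨δ, hδ, hf⟩ := Metric.uniformContinuousOn_iff_le.mp
    (hK.uniformContinuousOn_of_continuous hf) ε hε
  refine ⟨min δ r, lt_min hδ hr, fun x y hxy => ?_⟩
  have h := hf (x, x) (by simp [hr.le]) (x, y) (hxy.trans (min_le_right _ _))
    (by simpa [Prod.dist_eq] using hxy.trans (min_le_left _ _))
  simpa [Function.uncurry, hdiag, Real.dist_eq, abs_sub_comm] using h

end FieldsOfCompactSets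

theorem continuousOn_intervalIntegral_of_continuousOn {P : Type*} [TopologicalSpace P]
    {s : Set P} {f : P → ℝ → ℝ} {a b : ℝ} (hab : a ≤ b)
    (hf : ContinuousOn (Function.uncurry f) (s ×ˢ Icc a b)) :
    ContinuousOn (fun p => ∫ u in a..b, f p u) s := by
  rw [continuousOn_iff_continuous_domRestrict]
  have hg : Continuous fun q : s × ℝ => f q.1 (projIcc a b hab q.2) :=
    hf.comp_continuous (f := fun q : s × ℝ => ((q.1 : P), (projIcc a b hab q.2 : ℝ)))
      (by fun_prop) fun q => ⟨q.1.2, (projIcc a b hab q.2).2⟩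
  refine (intervalIntegral.continuous_parametric_intervalIntegral_of_continuous'
    (μ := MeasureTheory.volume) (f := fun (p : s) u => f p (projIcc a b hab u)) hg a b).congr
    fun p => ?_
  refine intervalIntegral.integral_congr fun u hu => ?_
  rw [uIcc_of_le hab] at hu
  simp [projIcc_of_mem hab hu]

namespace IsFlow

variable {X : Type u} [MetricSpace X] {φ : ℝ → X → X}

theorem continuous_orbit (hφ : IsFlow φ) (y : X) : Continuous fun t => φ t y :=
  hφ.1.comp (continuous_id.prodMk continuous_const)

theorem continuous_apply (hφ : IsFlow φ) (t : ℝ) : Continuous (φ t) :=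
  hφ.1.comp (continuous_const.prodMk continuous_id)

theorem apply_comm (hφ : IsFlow φ) (s t : ℝ) (z : X) : φ s (φ t z) = φ t (φ s z) := by
  rw [← hφ.2.2, add_comm, hφ.2.2]

theorem apply_neg_apply (hφ : IsFlow φ) (t : ℝ) (z : X) : φ (-t) (φ t z) = z := by
  rw [← hφ.2.2, neg_add_cancel, hφ.2.1]

theorem apply_intCast_mul (hφ : IsFlow φ) {v : ℝ} {z : X} (hv : φ v z = z) (k : ℤ) :
    φ (k * v) z = z := by
  induction k with
  | zero => simpa using hφ.2.1 z
  | succ k ih => rw [Int.cast_add, Int.cast_one, add_one_mul, add_comm, hφ.2.2, ih, hv]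
  | pred k ih =>
    rw [Int.cast_sub, Int.cast_one, sub_one_mul, sub_eq_neg_add, hφ.2.2, ih, ← hv,
      apply_neg_apply hφ, hv]

variable [CompactSpace X]

theorem exists_forall_dist_apply_le (hφ : IsFlow φ) (K : ℝ) :
    ∀ ε > 0, ∃ δ > 0, ∀ s t x y, |s| ≤ K → |t| ≤ K → |s - t| ≤ δ → dist x y ≤ δ →
      dist (φ s x) (φ t y) ≤ ε := by
  intro ε hε
  obtain ⟨δ, hδ, h⟩ := Metric.uniformContinuousOn_iff_le.mp
    ((isCompact_Icc.prod isCompact_univ).uniformContinuousOn_of_continuous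
      hφ.1.continuousOn) ε hε
  refine ⟨δ, hδ, fun s t x y hs ht hst hxy => ?_⟩
  exact h (s, x) ⟨abs_le.mp hs, mem_univ x⟩ (t, y) ⟨abs_le.mp ht, mem_univ y⟩
    (by rw [Prod.dist_eq, Real.dist_eq]; exact max_le hst hxy)

theorem exists_forall_dist_apply_self_le (hφ : IsFlow φ) :
    ∀ ε > 0, ∃ δ > 0, ∀ z v, |v| ≤ δ → dist (φ v z) z ≤ ε := by
  intro ε hε
  obtain ⟨δ, hδ, h⟩ := hφ.exists_forall_dist_apply_le 1 ε hε
  refine ⟨min δ 1, by positivity, fun z v hv => ?_⟩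
  have := h v 0 z z (hv.trans (min_le_right _ _)) (by simp)
    (by simpa using hv.trans (min_le_left _ _)) (by simp [hδ.le])
  rwa [hφ.2.1] at this

theorem exists_forall_dist_apply_apply_le (hφ : IsFlow φ) (K : ℝ) :
    ∀ ε > 0, ∃ δ > 0, ∀ z w, dist z w ≤ δ → ∀ u, |u| ≤ K → dist (φ u z) (φ u w) ≤ ε := by
  intro ε hε
  obtain ⟨δ, hδ, h⟩ := hφ.exists_forall_dist_apply_le K ε hε
  exact ⟨δ, hδ, fun z w hzw u hu => h u u z w hu hu (by simp [hδ.le]) hzw⟩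

end IsFlow

namespace IsRegularFlow

variable {X : Type u} [MetricSpace X] [CompactSpace X] {φ : ℝ → X → X}

theorem exists_forall_apply_ne (hφ : IsRegularFlow φ) :
    ∃ t₀ > 0, ∀ z v, 0 < v → v ≤ t₀ → φ v z ≠ z := by
  by_contra! h
  choose z v hv0 hvle hper using fun n : ℕ => h (1 / (n + 1)) Nat.one_div_pos_of_nat
  obtain ⟨x, -, k, hk, hx⟩ := isCompact_univ.tendsto_subseq (x := z) fun n => mem_univ _
  have hv : Tendsto (v ∘ k) atTop (𝓝 0) :=
    tendsto_of_tendsto_of_tendsto_of_le_of_le tendsto_const_nhds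
      (tendsto_one_div_add_atTop_nhds_zero_nat.comp hk.tendsto_atTop)
      (fun n => (hv0 _).le) fun n => hvle _
  obtain ⟨t, ht⟩ := hφ.2 x
  refine ht (tendsto_nhds_unique ((hφ.1.continuous_apply t |>.tendsto x).comp hx) ?_)
  -- reduce `t` modulo the period `v n`; the remainders tend to `0`
  have hrem : ∀ n, φ t (z n) = φ (v n * Int.fract (t / v n)) (z n) := fun n => by
    conv_lhs => rw [← mul_div_cancel₀ t (hv0 n).ne', ← Int.floor_add_fract (t / v n), mul_add,
      add_comm, hφ.1.2.2, mul_comm (v n) (⌊t / v n⌋ : ℝ), hφ.1.apply_intCast_mul (hper n)]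
  have hr : Tendsto (fun n => v (k n) * Int.fract (t / v (k n))) atTop (𝓝 0) :=
    tendsto_of_tendsto_of_tendsto_of_le_of_le tendsto_const_nhds hv
      (fun n => mul_nonneg (hv0 _).le (Int.fract_nonneg _))
      fun n => mul_le_of_le_one_right (hv0 _).le (Int.fract_lt_one _).le
  simp only [Function.comp_def, hrem]
  simpa [hφ.1.2.1, Function.comp_def] using (hφ.1.1.tendsto (0, x)).comp (hr.prodMk_nhds hx)

end IsRegularFlow

theorem mul_sub_le_window_sub {g : ℝ → ℝ} (hg : Continuous g) {T a t' t : ℝ} (htt : t' ≤ t)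
    (hout : ∀ u ∈ Icc (T + t') (T + t) ∪ Icc (-T + t') (-T + t), 3 / 4 * a ≤ g u)
    (hin : ∀ u ∈ Icc t' t, g u ≤ a / 4) :
    a * (t - t') ≤ ((∫ u in t..T + t, g u) - ∫ u in -T + t..t, g u) -
      ((∫ u in t'..T + t', g u) - ∫ u in -T + t'..t', g u) := by
  have hi : ∀ b c : ℝ, IntervalIntegrable g MeasureTheory.volume b c := hg.intervalIntegrable
  -- the difference is `∫_{T+t'}^{T+t} g + ∫_{-T+t'}^{-T+t} g - 2 ∫_{t'}^{t} g`
  have hfwd := intervalIntegral.integral_interval_sub_interval_comm' (hi t (T + t))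
    (hi t' (T + t')) (hi t t')
  have hbwd := intervalIntegral.integral_interval_sub_interval_comm' (hi (-T + t) t)
    (hi (-T + t') t') (hi (-T + t) (-T + t'))
  have hconst : ∀ b c m : ℝ, ∫ _ in b..c, m = (c - b) * m := by simp
  have hA := intervalIntegral.integral_mono_on (by linarith) intervalIntegrable_const (hi _ _)
    fun u hu => hout u (Or.inl hu)
  have hC := intervalIntegral.integral_mono_on (by linarith) intervalIntegrable_const (hi _ _)
    fun u hu => hout u (Or.inr hu)
  have hB := intervalIntegral.integral_mono_on htt (hi _ _) intervalIntegrable_const hin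
  rw [hconst] at hA hB hC
  linarith

noncomputable def whitney {X : Type u} [MetricSpace X] (φ : ℝ → X → X) (T : ℝ) (x y : X) : ℝ :=
  (∫ u in 0..T, dist (φ u y) x) - ∫ u in -T..0, dist (φ u y) x

namespace IsFlow

variable {X : Type u} [MetricSpace X] {φ : ℝ → X → X}

theorem whitney_apply (hφ : IsFlow φ) (T : ℝ) (x y : X) (t : ℝ) :
    whitney φ T x (φ t y) =
      (∫ u in t..T + t, dist (φ u y) x) - ∫ u in -T + t..t, dist (φ u y) x := by
  simp only [whitney, ← hφ.2.2]
  rw [intervalIntegral.integral_comp_add_right (fun u => dist (φ u y) x),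
    intervalIntegral.integral_comp_add_right (fun u => dist (φ u y) x), zero_add]

theorem continuous_whitney (hφ : IsFlow φ) (T : ℝ) :
    Continuous fun p : X × X => whitney φ T p.1 p.2 := by
  have hf : Continuous fun q : (X × X) × ℝ => dist (φ q.2 q.1.2) q.1.1 :=
    (hφ.1.comp (continuous_snd.prodMk (continuous_snd.comp continuous_fst))).dist
      (continuous_fst.comp continuous_fst)
  exact (intervalIntegral.continuous_parametric_intervalIntegral_of_continuous' hf 0 T).sub
    (intervalIntegral.continuous_parametric_intervalIntegral_of_continuous' hf (-T) 0)

variable [CompactSpace X]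

theorem exists_le_dist_apply_self (hφ : IsFlow φ) {α β : ℝ}
    (hper : ∀ z v, α ≤ v → v ≤ β → φ v z ≠ z) :
    ∃ a > 0, ∀ z v, α ≤ |v| → |v| ≤ β → a ≤ dist (φ v z) z := by
  obtain ⟨a, ha, h⟩ := (isCompact_univ.prod isCompact_Icc).exists_forall_le'
    ((hφ.1.comp (continuous_snd.prodMk continuous_fst)).dist continuous_fst).continuousOn
    (a := 0) fun p (hp : p ∈ (univ : Set X) ×ˢ Icc α β) =>
      dist_pos.mpr (hper p.1 p.2 hp.2.1 hp.2.2)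
  refine ⟨a, ha, fun z v h1 h2 => ?_⟩
  rcases le_or_gt 0 v with hv | hv
  · rw [abs_of_nonneg hv] at h1 h2
    exact h (z, v) ⟨mem_univ _, h1, h2⟩
  · rw [abs_of_neg hv] at h1 h2
    simpa [hφ.apply_neg_apply, dist_comm] using h (φ v z, -v) ⟨mem_univ _, h1, h2⟩

theorem exists_whitney_slope (hφ : IsFlow φ) {T : ℝ} (hT : 0 < T)
    (hper : ∀ z v, T / 2 ≤ v → v ≤ 3 * T / 2 → φ v z ≠ z) :
    ∃ a > 0, ∃ r > 0, ∃ τ > 0, ∀ x y, dist x y ≤ r → ∀ t' t, -τ ≤ t' → t' ≤ t → t ≤ τ →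
      a * (t - t') ≤ whitney φ T x (φ t y) - whitney φ T x (φ t' y) := by
  obtain ⟨a, ha, hfar⟩ := hφ.exists_le_dist_apply_self hper
  obtain ⟨r, hr, hclose⟩ := hφ.exists_forall_dist_apply_apply_le (2 * T) (a / 8) (by positivity)
  obtain ⟨δ, hδ, hnear⟩ := hφ.exists_forall_dist_apply_self_le (a / 8) (by positivity)
  refine ⟨a, ha, r, hr, min δ (T / 2), by positivity, fun x y hxy t' t ht' htt ht => ?_⟩
  have hτδ := min_le_left δ (T / 2)
  have hτT := min_le_right δ (T / 2)
  rw [hφ.whitney_apply, hφ.whitney_apply]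
  refine mul_sub_le_window_sub ((hφ.continuous_orbit y).dist continuous_const) htt
    (fun u hu => ?_) fun u hu => ?_
  · have hu' : T / 2 ≤ |u| ∧ |u| ≤ 3 * T / 2 := by
      rcases hu with ⟨h1, h2⟩ | ⟨h1, h2⟩
      · rw [abs_of_pos (by linarith)]; constructor <;> linarith
      · rw [abs_of_neg (by linarith)]; constructor <;> linarith
    have h1 := hfar x u hu'.1 hu'.2
    have h2 := hclose x y hxy u (by linarith)
    have h3 := dist_triangle (φ u x) (φ u y) x
    linarith
  · have hu' : |u| ≤ min δ (T / 2) := abs_le.mpr ⟨by linarith [hu.1], by linarith [hu.2]⟩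
    have h1 := hnear x u (hu'.trans hτδ)
    have h2 := hclose x y hxy u (by linarith)
    have h3 := dist_triangle (φ u y) (φ u x) x
    rw [dist_comm] at h2
    linarith

end IsFlow

theorem mul_abs_sub_le_abs_sub_of_slope {f : ℝ → ℝ} {a τ : ℝ}
    (hf : ∀ t' t, -τ ≤ t' → t' ≤ t → t ≤ τ → a * (t - t') ≤ f t - f t') {s s' : ℝ}
    (hs : |s| ≤ τ) (hs' : |s'| ≤ τ) : a * |s - s'| ≤ |f s - f s'| := by
  obtain ⟨hs1, hs2⟩ := abs_le.mp hs
  obtain ⟨hs1', hs2'⟩ := abs_le.mp hs'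
  rcases le_total s' s with h | h
  · rw [abs_of_nonneg (sub_nonneg.mpr h)]
    exact (hf s' s hs1' h hs2).trans (le_abs_self _)
  · rw [abs_sub_comm s s', abs_sub_comm (f s) (f s'), abs_of_nonneg (sub_nonneg.mpr h)]
    exact (hf s s' hs1 h hs2').trans (le_abs_self _)

theorem continuousOn_root_of_slope {P : Type*} [MetricSpace P] [CompactSpace P] {G : P → ℝ → ℝ}
    (hG : Continuous (Function.uncurry G)) {a τ : ℝ} (ha : 0 < a) {D : Set P} {s : P → ℝ}
    (hs : ∀ p ∈ D, |s p| ≤ τ) (hroot : ∀ p ∈ D, G p (s p) = 0)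
    (hsep : ∀ p ∈ D, ∀ t t', |t| ≤ τ → |t'| ≤ τ → a * |t - t'| ≤ |G p t - G p t'|) :
    ContinuousOn s D := by
  rw [Metric.continuousOn_iff]
  intro p hp ε hε
  obtain ⟨δ, hδ, hG'⟩ := Metric.uniformContinuousOn_iff.mp
    ((isCompact_univ.prod isCompact_Icc).uniformContinuousOn_of_continuous
      (s := (univ : Set P) ×ˢ Icc (-τ) τ) hG.continuousOn) (a * ε) (by positivity)
  refine ⟨δ, hδ, fun q hq hqp => ?_⟩
  have hclose := hG' (p, s q) ⟨mem_univ _, abs_le.mp (hs q hq)⟩ (q, s q)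
    ⟨mem_univ _, abs_le.mp (hs q hq)⟩ (by simpa [Prod.dist_eq, dist_comm] using hqp)
  have hsep' := hsep p hp (s q) (s p) (hs q hq) (hs p hp)
  simp only [Function.uncurry, Real.dist_eq, hroot q hq, hroot p hp, sub_zero] at hclose hsep'
  rw [Real.dist_eq]
  exact lt_of_mul_lt_mul_left (hsep'.trans_lt hclose) ha.le

/-- `l x y` is the time at which the orbit of `y` crosses a local section through `x`:
`y = φ (l x y) y₀` with `l x y₀ = 0`. -/
def IsLocalTime {X : Type u} [MetricSpace X] (φ : ℝ → X → X) (r τ : ℝ) (l : X → X → ℝ) :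
    Prop :=
  ContinuousOn (Function.uncurry l) {p | dist p.1 p.2 ≤ r} ∧ (∀ x, l x x = 0) ∧
    ∀ x y t, dist x y ≤ r → dist x (φ t y) ≤ r → |t| ≤ τ → l x (φ t y) = l x y + t

namespace IsFlow

variable {X : Type u} [MetricSpace X] [CompactSpace X] {φ : ℝ → X → X}

theorem exists_isLocalTime (hφ : IsFlow φ) {F : X → X → ℝ}
    (hF : Continuous (Function.uncurry F)) (hdiag : ∀ x, F x x = 0) {a r τ : ℝ} (ha : 0 < a)
    (hr : 0 < r) (hτ : 0 < τ) (hslope : ∀ x y, dist x y ≤ r → ∀ t' t, -τ ≤ t' → t' ≤ t → t ≤ τ →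
      a * (t - t') ≤ F x (φ t y) - F x (φ t' y)) :
    ∃ r' > 0, ∃ l, IsLocalTime φ r' (τ / 2) l ∧ ∀ x y, dist x y ≤ r' → |l x y| ≤ τ / 2 := by
  have hG : Continuous fun q : (X × X) × ℝ => F q.1.1 (φ q.2 q.1.2) :=
    hF.comp ((continuous_fst.comp continuous_fst).prodMk
      (hφ.1.comp (continuous_snd.prodMk (continuous_snd.comp continuous_fst))))
  obtain ⟨δ, hδ, hsmall⟩ := exists_forall_abs_le_of_continuousOn one_pos hF.continuousOn hdiag
    (a * τ / 2) (by positivity)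
  set D := {p : X × X | dist p.1 p.2 ≤ min δ r}
  have hD : ∀ p ∈ D, dist p.1 p.2 ≤ r := fun p hp => hp.trans (min_le_right _ _)
  have hroot : ∀ p ∈ D, ∃ s ∈ Icc (-(τ / 2)) (τ / 2), F p.1 (φ s p.2) = 0 := by
    intro p hp
    have h0 := abs_le.mp (hsmall p.1 p.2 (hp.trans (min_le_left _ _)))
    have hpos := hslope p.1 p.2 (hD p hp) 0 (τ / 2) (by linarith) (by linarith) (by linarith)
    have hneg := hslope p.1 p.2 (hD p hp) (-(τ / 2)) 0 (by linarith) (by linarith)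
      (by linarith)
    rw [hφ.2.1] at hpos hneg
    have hc : Continuous fun t => F p.1 (φ t p.2) :=
      hG.comp (f := fun t : ℝ => (p, t)) (by fun_prop)
    exact intermediate_value_Icc (by linarith) hc.continuousOn ⟨by linarith, by linarith⟩
  choose! s hs hGs using hroot
  have hs' : ∀ p ∈ D, |s p| ≤ τ := fun p hp =>
    abs_le.mpr ⟨by linarith [(hs p hp).1], by linarith [(hs p hp).2]⟩
  have hsep : ∀ p ∈ D, ∀ t t', |t| ≤ τ → |t'| ≤ τ →
      a * |t - t'| ≤ |F p.1 (φ t p.2) - F p.1 (φ t' p.2)| :=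
    fun p hp _ _ => mul_abs_sub_le_abs_sub_of_slope (hslope p.1 p.2 (hD p hp))
  have hs_unique : ∀ p ∈ D, ∀ t, |t| ≤ τ → F p.1 (φ t p.2) = 0 → s p = t := by
    intro p hp t ht hGt
    have h := hsep p hp (s p) t (hs' p hp) ht
    rw [hGs p hp, hGt, sub_self, abs_zero] at h
    exact sub_eq_zero.mp (abs_nonpos_iff.mp (nonpos_of_mul_nonpos_right h ha))
  refine ⟨min δ r, lt_min hδ hr, fun x y => -s (x, y), ⟨?_, fun x => ?_,
    fun x y t hxy hxty ht => ?_⟩, fun x y hxy => by rw [abs_neg]; exact abs_le.mpr (hs _ hxy)⟩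
  · exact (continuousOn_root_of_slope (G := fun p t => F p.1 (φ t p.2)) hG ha hs' hGs
      hsep).neg
  · show -s (x, x) = 0
    rw [hs_unique (x, x) (show dist x x ≤ _ by rw [dist_self]; exact (lt_min hδ hr).le) 0
      (by simp [hτ.le]) (by simp [hφ.2.1, hdiag]), neg_zero]
  · have key := hs_unique (x, y) hxy (s (x, φ t y) + t)
      (abs_le.mpr ⟨by linarith [(hs (x, φ t y) hxty).1, (abs_le.mp ht).1],
        by linarith [(hs (x, φ t y) hxty).2, (abs_le.mp ht).2]⟩)
      (by rw [hφ.2.2]; exact hGs (x, φ t y) hxty)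
    show -s (x, φ t y) = -s (x, y) + t
    linarith

end IsFlow

theorem integral_shift_sub_integral_le {g : ℝ → ℝ} {T s τ : ℝ} (hs0 : 0 ≤ s) (hsT : s ≤ T)
    (hg : ContinuousOn g (Icc 0 (T + s))) (hbound : ∀ u ∈ Icc 0 (T + s), |g u| ≤ τ) :
    (∫ u in s..T + s, g u) - ∫ u in 0..T, g u ≤ 2 * τ * s := by
  have hi : ∀ b ∈ Icc 0 (T + s), ∀ c ∈ Icc 0 (T + s),
      IntervalIntegrable g MeasureTheory.volume b c :=
    fun b hb c hc => (hg.mono (uIcc_subset_Icc hb hc)).intervalIntegrable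
  have hbd : ∀ b c, 0 ≤ b → b ≤ c → c ≤ T + s → |∫ u in b..c, g u| ≤ τ * (c - b) := by
    intro b c hb hbc hc
    have := intervalIntegral.norm_integral_le_of_norm_le_const (f := g) (C := τ) (a := b)
      (b := c) fun u hu => ?_
    · rwa [Real.norm_eq_abs, abs_of_nonneg (sub_nonneg.mpr hbc)] at this
    · rw [uIoc_of_le hbc] at hu
      rw [Real.norm_eq_abs]
      exact hbound u ⟨by linarith [hu.1], by linarith [hu.2]⟩
  rw [intervalIntegral.integral_interval_sub_interval_comm' (hi s ⟨hs0, by linarith⟩ (T + s)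
    ⟨by linarith, le_rfl⟩) (hi 0 ⟨le_rfl, by linarith⟩ T ⟨by linarith, by linarith⟩)
    (hi s ⟨hs0, by linarith⟩ 0 ⟨le_rfl, by linarith⟩)]
  linarith [(abs_le.mp (hbd T (T + s) (by linarith) (by linarith) le_rfl)).2,
    (abs_le.mp (hbd 0 s le_rfl hs0 (by linarith))).1]

noncomputable def averageAlongFlow {X : Type u} (φ : ℝ → X → X) (l : X → X → ℝ) (T : ℝ)
    (x y : X) : ℝ :=
  T⁻¹ * ∫ u in 0..T, l (φ u x) (φ u y)

namespace IsLocalTime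

variable {X : Type u} [MetricSpace X] {φ : ℝ → X → X} {l : X → X → ℝ} {r τ T : ℝ}

theorem continuousOn_along (hφ : IsFlow φ) (hl : IsLocalTime φ r τ l) {x y : X} {K : ℝ}
    (hpair : ∀ u, |u| ≤ K → dist (φ u x) (φ u y) ≤ r) :
    ContinuousOn (fun u => l (φ u x) (φ u y)) (Icc (-K) K) :=
  hl.1.comp ((hφ.continuous_orbit x).prodMk (hφ.continuous_orbit y)).continuousOn
    fun u hu => hpair u (abs_le.mpr hu)

theorem continuousOn_averageAlongFlow (hφ : IsFlow φ) (hl : IsLocalTime φ r τ l) (hT : 0 ≤ T)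
    {r' : ℝ} (hpair : ∀ x y, dist x y ≤ r' → ∀ u, |u| ≤ T → dist (φ u x) (φ u y) ≤ r) :
    ContinuousOn (Function.uncurry (averageAlongFlow φ l T)) {p | dist p.1 p.2 ≤ r'} := by
  refine continuousOn_const.mul (continuousOn_intervalIntegral_of_continuousOn hT
    (f := fun (p : X × X) (u : ℝ) => l (φ u p.1) (φ u p.2))
    (hl.1.comp (f := fun q : (X × X) × ℝ => (φ q.2 q.1.1, φ q.2 q.1.2))
      (Continuous.continuousOn ?_) ?_))
  · exact (hφ.1.comp (continuous_snd.prodMk (continuous_fst.comp continuous_fst))).prodMk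
      (hφ.1.comp (continuous_snd.prodMk (continuous_snd.comp continuous_fst)))
  · rintro ⟨p, u⟩ ⟨hp, hu⟩
    exact hpair p.1 p.2 hp u (abs_le.mpr ⟨by linarith [hu.1], hu.2⟩)

theorem averageAlongFlow_self (hl : IsLocalTime φ r τ l) (x : X) :
    averageAlongFlow φ l T x x = 0 := by
  simp [averageAlongFlow, hl.2.1]

theorem averageAlongFlow_apply_right (hφ : IsFlow φ) (hl : IsLocalTime φ r τ l) (hT : 0 < T)
    {x y : X} {t : ℝ} (hpair : ∀ u, |u| ≤ T → dist (φ u x) (φ u y) ≤ r / 2)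
    (hdisp : ∀ z, dist (φ t z) z ≤ r / 2) (ht : |t| ≤ τ) :
    averageAlongFlow φ l T x (φ t y) = averageAlongFlow φ l T x y + t := by
  have hr : r / 2 ≤ r := by
    linarith [dist_nonneg.trans (hpair 0 (by rw [abs_zero]; exact hT.le))]
  have hint := ((hl.continuousOn_along hφ fun u hu => (hpair u hu).trans hr).mono
    (by rw [uIcc_of_le hT.le]; exact Icc_subset_Icc (by linarith) le_rfl)).intervalIntegrable
    (μ := MeasureTheory.volume)
  have hpt : EqOn (fun u => l (φ u x) (φ u (φ t y))) (fun u => l (φ u x) (φ u y) + t)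
      (uIcc 0 T) := by
    intro u hu
    rw [uIcc_of_le hT.le] at hu
    have hu' : |u| ≤ T := abs_le.mpr ⟨by linarith [hu.1], hu.2⟩
    simp only [hφ.apply_comm u t]
    refine hl.2.2 _ _ t ((hpair u hu').trans hr) ?_ ht
    calc dist (φ u x) (φ t (φ u y)) ≤ dist (φ u x) (φ u y) + dist (φ t (φ u y)) (φ u y) :=
          dist_triangle_right _ _ _
      _ ≤ r / 2 + r / 2 := add_le_add (hpair u hu') (hdisp _)
      _ = r := add_halves r
  simp only [averageAlongFlow]
  rw [intervalIntegral.integral_congr hpt, intervalIntegral.integral_add hint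
    intervalIntegrable_const, intervalIntegral.integral_const, smul_eq_mul, sub_zero, mul_add,
    inv_mul_cancel_left₀ hT.ne']

theorem averageAlongFlow_apply_left_add_le (hφ : IsFlow φ) (hl : IsLocalTime φ r τ l)
    (hbound : ∀ x y, dist x y ≤ r → |l x y| ≤ τ) (hT : 0 < T) {x z : X} {s : ℝ}
    (hpair : ∀ u, |u| ≤ 2 * T → dist (φ u x) (φ u z) ≤ r / 2)
    (hdisp : ∀ w, dist (φ (-s) w) w ≤ r / 2) (hs0 : 0 ≤ s) (hsT : s ≤ T) (hsτ : s ≤ τ) :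
    averageAlongFlow φ l T (φ s x) z + s ≤ averageAlongFlow φ l T x z + 2 * τ * s / T := by
  have hr : r / 2 ≤ r := by
    linarith [dist_nonneg.trans (hpair 0 (by rw [abs_zero]; positivity))]
  have hcont := hl.continuousOn_along hφ (K := 2 * T) fun u hu => (hpair u hu).trans hr
  -- moving the base point forward by `s` is the same as moving time forward, up to `-s`
  have hpt : EqOn (fun u => l (φ u (φ s x)) (φ u z))
      (fun u => l (φ (u + s) x) (φ (u + s) z) - s) (uIcc 0 T) := by
    intro u hu
    rw [uIcc_of_le hT.le] at hu
    have hus : |u + s| ≤ 2 * T := abs_le.mpr ⟨by linarith [hu.1], by linarith [hu.2]⟩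
    have hz : φ u z = φ (-s) (φ (u + s) z) := by rw [← hφ.2.2, neg_add_cancel_comm_assoc]
    simp only [← hφ.2.2 u s, hz, sub_eq_add_neg]
    refine hl.2.2 _ _ (-s) ((hpair _ hus).trans hr) ?_ (by rwa [abs_neg, abs_of_nonneg hs0])
    calc dist (φ (u + s) x) (φ (-s) (φ (u + s) z))
        ≤ dist (φ (u + s) x) (φ (u + s) z) + dist (φ (-s) (φ (u + s) z)) (φ (u + s) z) :=
          dist_triangle_right _ _ _
      _ ≤ r / 2 + r / 2 := add_le_add (hpair _ hus) (hdisp _)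
      _ = r := add_halves r
  have hshifted : ∫ u in 0..T, l (φ u (φ s x)) (φ u z) =
      (∫ u in s..T + s, l (φ u x) (φ u z)) - T * s := by
    have hsub : uIcc s (T + s) ⊆ Icc (-(2 * T)) (2 * T) := by
      rw [uIcc_of_le (by linarith)]
      exact Icc_subset_Icc (by linarith) (by linarith)
    have hint : IntervalIntegrable (fun u => l (φ (u + s) x) (φ (u + s) z))
        MeasureTheory.volume 0 T := by
      simpa using
        ((hcont.mono hsub).intervalIntegrable (μ := MeasureTheory.volume)).comp_add_right s
    rw [intervalIntegral.integral_congr hpt, intervalIntegral.integral_sub hint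
      intervalIntegrable_const, intervalIntegral.integral_comp_add_right
      (fun u => l (φ u x) (φ u z)) s, intervalIntegral.integral_const, smul_eq_mul, zero_add,
      sub_zero, add_comm]
  have hest := integral_shift_sub_integral_le hs0 hsT
    (hcont.mono (Icc_subset_Icc (by linarith) (by linarith))) fun u hu => hbound _ _
      ((hpair u (abs_le.mpr ⟨by linarith [hu.1], by linarith [hu.2]⟩)).trans hr)
  simp only [averageAlongFlow]
  rw [hshifted, mul_sub, inv_mul_cancel_left₀ hT.ne', sub_add_cancel, div_eq_inv_mul, ← mul_add]
  exact mul_le_mul_of_nonneg_left (by linarith) (inv_nonneg.mpr hT.le)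

end IsLocalTime

namespace IsFlow

variable {X : Type u} [MetricSpace X] [CompactSpace X] {φ : ℝ → X → X}

theorem exists_isLocalTime_drift (hφ : IsFlow φ) {l : X → X → ℝ} {r τ : ℝ} (hr : 0 < r)
    (hτ : 0 < τ) (hl : IsLocalTime φ r τ l) (hbound : ∀ x y, dist x y ≤ r → |l x y| ≤ τ) :
    ∃ r' > 0, ∃ τ' > 0, ∃ L, IsLocalTime φ r' τ' L ∧
      ∀ x z s, dist x z ≤ r' → 0 ≤ s → s ≤ τ' → L (φ s x) z + s / 2 ≤ L x z := by
  obtain ⟨r', hr', hpair⟩ := hφ.exists_forall_dist_apply_apply_le (8 * τ) (r / 2) (by positivity)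
  obtain ⟨δ, hδ, hdisp⟩ := hφ.exists_forall_dist_apply_self_le (r / 2) (by positivity)
  have hT : 0 < 4 * τ := by positivity
  refine ⟨r', hr', min δ τ, lt_min hδ hτ, averageAlongFlow φ l (4 * τ),
    ⟨?_, hl.averageAlongFlow_self, fun x y t hxy _ ht => ?_⟩, fun x z s hxz hs0 hs => ?_⟩
  · exact hl.continuousOn_averageAlongFlow hφ hT.le fun x y hxy u hu =>
      (hpair x y hxy u (by linarith)).trans (by linarith)
  · exact hl.averageAlongFlow_apply_right hφ hT (fun u hu => hpair x y hxy u (by linarith))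
      (fun z => hdisp z t (ht.trans (min_le_left _ _))) (ht.trans (min_le_right _ _))
  · have hsτ := hs.trans (min_le_right _ _)
    have := hl.averageAlongFlow_apply_left_add_le hφ hbound hT
      (fun u hu => hpair x z hxz u (by linarith))
      (fun w => hdisp w (-s) (by rw [abs_neg, abs_of_nonneg hs0]; exact hs.trans (min_le_left _ _)))
      hs0 (by linarith) hsτ
    have e : 2 * τ * s / (4 * τ) = s / 2 := by field_simp; ring
    linarith

end IsFlow

def localSection {X : Type u} [MetricSpace X] (L : X → X → ℝ) (r : ℝ) (x : X) : Set X :=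
  {y | dist x y ≤ r ∧ L x y = 0}

theorem isMonotonousField_localSection {X : Type u} [MetricSpace X] {φ : ℝ → X → X}
    {L : X → X → ℝ} {r τ : ℝ} (hτ : 0 < τ)
    (hdrift : ∀ x z s, dist x z ≤ r → 0 ≤ s → s ≤ τ → L (φ s x) z + s / 2 ≤ L x z) :
    IsMonotonousField φ (localSection L r) := by
  refine ⟨τ, hτ, fun x t ht => eq_empty_of_forall_notMem fun z ⟨hz, hz'⟩ => ?_⟩
  have := hdrift x z t hz.1 ht.1.le ht.2.le
  rw [hz.2, hz'.2] at this
  linarith [ht.1]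

namespace IsLocalTime

variable {X : Type u} [MetricSpace X] [CompactSpace X] {φ : ℝ → X → X} {L : X → X → ℝ} {r τ : ℝ}

theorem isCrossSectionField_localSection (hφ : IsFlow φ) (hL : IsLocalTime φ r τ L) (hr : 0 < r)
    (hτ : 0 < τ) : IsCrossSectionField φ (localSection L r) := by
  have hgraph : IsClosed {p : X × X | p.2 ∈ localSection L r p.1} :=
    hL.1.preimage_isClosed_of_isClosed (isClosed_le (by fun_prop) continuous_const)
      isClosed_singleton
  have hmem : ∀ x, x ∈ localSection L r x := fun x => ⟨by rw [dist_self]; exact hr.le, hL.2.1 x⟩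
  obtain ⟨δ, hδ, hdisp⟩ := hφ.exists_forall_dist_apply_self_le (r / 2) (by positivity)
  set τ₀ := min δ τ
  have hτ₀ : 0 < τ₀ := lt_min hδ hτ
  obtain ⟨ρ, hρ, hsmall⟩ := exists_forall_abs_le_of_continuousOn hr hL.1 hL.2.1 τ₀ hτ₀
  refine ⟨isFieldOfCompactSets_of_isClosed hmem hgraph, τ₀, hτ₀,
    ⟨isFieldOfCompactSets_of_isClosed
      (fun x => ⟨0, ⟨by linarith, hτ₀.le⟩, x, hmem x, (hφ.2.1 x).symm⟩)
      (isClosed_flowSat_graph hφ.1 isCompact_Icc hgraph), min ρ (r / 2), by positivity,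
      fun x z hz => ?_⟩, fun x y hy => ?_⟩
  · -- flowing `z` back by `L x z` lands on the section through `x`
    have hxz : dist x z ≤ min ρ (r / 2) := by rw [dist_comm]; exact hz
    have ht := hsmall x z (hxz.trans (min_le_left _ _))
    have hzy : dist (φ (-L x z) z) z ≤ r / 2 :=
      hdisp z _ (by rw [abs_neg]; exact ht.trans (min_le_left _ _))
    have hxy : dist x (φ (-L x z) z) ≤ r := by
      linarith [dist_triangle_right x (φ (-L x z) z) z, hxz.trans (min_le_right _ _)]
    refine ⟨L x z, abs_le.mp ht, φ (-L x z) z, ⟨hxy, ?_⟩, by rw [← hφ.2.2, add_neg_cancel, hφ.2.1]⟩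
    rw [hL.2.2 x z _ (by linarith [hxz.trans (min_le_right _ _)]) hxy
      (by rw [abs_neg]; exact ht.trans (min_le_right _ _)), add_neg_cancel]
  · ext z
    constructor
    · rintro ⟨⟨hxz, hLz⟩, t, ht, rfl⟩
      have := hL.2.2 x y t hy.1 hxz (ht.trans (min_le_right _ _))
      rw [hLz, hy.2, zero_add] at this
      rw [← this, hφ.2.1]
      rfl
    · rintro rfl
      exact ⟨hy, 0, by rw [abs_zero]; exact hτ₀.le, (hφ.2.1 _).symm⟩

end IsLocalTime

/-- Every regular flow on a compact metric space admits a monotonous field of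
cross sections. -/
theorem stmt1 {X : Type u} [MetricSpace X] [CompactSpace X] (φ : ℝ → X → X)
    (hφ : IsRegularFlow φ) :
    ∃ H : X → Set X, IsCrossSectionField φ H ∧ IsMonotonousField φ H := by
  obtain ⟨t₀, ht₀, hper⟩ := hφ.exists_forall_apply_ne
  obtain ⟨a, ha, r, hr, τ, hτ, hslope⟩ := hφ.1.exists_whitney_slope (T := t₀ / 2)
    (by positivity) fun z v h1 h2 => hper z v (by linarith) (by linarith)
  have hW := hφ.1.continuous_whitney (t₀ / 2)
  obtain ⟨r₁, hr₁, l, hl, hbound⟩ := hφ.1.exists_isLocalTime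
    (F := fun x y => whitney φ (t₀ / 2) x y - whitney φ (t₀ / 2) x x)
    (hW.sub (hW.comp (continuous_fst.prodMk continuous_fst))) (fun x => sub_self _) ha hr hτ
    fun x y hxy t' t h1 h2 h3 => by simpa using hslope x y hxy t' t h1 h2 h3
  obtain ⟨r₂, hr₂, τ₂, hτ₂, L, hL, hdrift⟩ :=
    hφ.1.exists_isLocalTime_drift hr₁ (by positivity) hl hbound
  exact ⟨localSection L r₂, hL.isCrossSectionField_localSection hφ.1 hr₂ hτ₂,
    isMonotonousField_localSection hτ₂ hdrift⟩
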